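/- arXiv:1510.02423 — 2 statements merged into one kernel-verified Lean document; each statement's English description precedes it below -/
import Mathlib

section
/- For nonzero α₁, α₂ ∈ ℂ, the representations ρ_{α₁} and ρ_{α₂} of the discrete Heisenberg group G are isomorphic (i.e. there exists a ℂ-linear bijection Θ : V → V with Θ ∘ ρ_{α₁}(g) = ρ_{α₂}(g) ∘ Θ for all g ∈ G) if and only if there exists an integer l with α₁ = q^l·α₂. Consequently the isomorphism classes of the representations ρ_α are parametrized by the elliptic curve ℂ*/q^ℤ. -/
/-!
The element `(1,0,0)` acts diagonally, `Δ_m ↦ q^{-(m+1)} α Δ_m`, so the eigenvalues of `ρ_α(1,0,0)`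
are the points of the orbit `q^ℤ α`; an isomorphism `ρ_{α₁} ≅ ρ_{α₂}` matches these eigenvalues.
Conversely, translating the basis by `l` intertwines `ρ_{q^l α}` with `ρ_α`.
-/

/-- The operator `ρ_α(a,b,c)` on the space `V = ℤ →₀ ℂ` of finitely supported functions,
defined on the standard basis by `ρ_α(a,b,c)(Δ_m) = q^{−c−a(m+1)}·α^a·Δ_{m+b}`. -/
noncomputable def heisRep (q : ℤ) (α : ℂ) (g : ℤ × ℤ × ℤ) : (ℤ →₀ ℂ) →ₗ[ℂ] (ℤ →₀ ℂ) :=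
  Finsupp.lift (ℤ →₀ ℂ) ℂ ℤ fun m =>
    ((q : ℂ) ^ (-g.2.2 - g.1 * (m + 1)) * α ^ g.1) • Finsupp.single (m + g.2.1) (1 : ℂ)

section
variable (q : ℤ) (α : ℂ)

lemma heisRep_single (g : ℤ × ℤ × ℤ) (m : ℤ) (c : ℂ) :
    heisRep q α g (Finsupp.single m c) =
      Finsupp.single (m + g.2.1) ((q : ℂ) ^ (-g.2.2 - g.1 * (m + 1)) * α ^ g.1 * c) := by
  rw [heisRep, Finsupp.lift_apply, Finsupp.sum_single_index (by rw [zero_smul]),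
    Finsupp.smul_single, smul_eq_mul, mul_one, Finsupp.smul_single, smul_eq_mul, mul_comm c]

lemma heisRep_diagonal_apply (a c : ℤ) (v : ℤ →₀ ℂ) (n : ℤ) :
    heisRep q α (a, 0, c) v n = (q : ℂ) ^ (-c - a * (n + 1)) * α ^ a * v n := by
  induction v using Finsupp.induction_linear with
  | zero => simp
  | add v w hv hw => simp only [map_add, Finsupp.add_apply, hv, hw, mul_add]
  | single m d =>
    rw [heisRep_single, add_zero, Finsupp.single_apply, Finsupp.single_apply]
    split_ifs with h
    · rw [h]
    · rw [mul_zero]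

lemma exists_eq_zpow_mul_of_heisRep_apply_eq_smul {v : ℤ →₀ ℂ} (hv : v ≠ 0) {μ : ℂ}
    (h : heisRep q α (1, 0, 0) v = μ • v) : ∃ n : ℤ, μ = (q : ℂ) ^ (-(n + 1)) * α := by
  obtain ⟨n, hn⟩ := Finsupp.ne_iff.mp hv
  refine ⟨n, mul_right_cancel₀ hn ?_⟩
  have hcoeff := DFunLike.congr_fun h n
  rw [heisRep_diagonal_apply, Finsupp.smul_apply, smul_eq_mul] at hcoeff
  simpa using hcoeff.symm

lemma heisRep_domLCongr_subRight (hq : q ≠ 0) (l : ℤ) (g : ℤ × ℤ × ℤ) (v : ℤ →₀ ℂ) :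
    Finsupp.domLCongr (M := ℂ) (R := ℂ) (Equiv.subRight l) (heisRep q ((q : ℂ) ^ l * α) g v) =
      heisRep q α g (Finsupp.domLCongr (M := ℂ) (R := ℂ) (Equiv.subRight l) v) := by
  induction v using Finsupp.induction_linear with
  | zero => simp
  | add v w hv hw => simp only [map_add, hv, hw]
  | single m c =>
    simp only [heisRep_single, Finsupp.domLCongr_single, Equiv.subRight_apply]
    rw [sub_add_eq_add_sub, mul_zpow, ← zpow_mul, ← mul_assoc, ← zpow_add₀ (by exact_mod_cast hq)]
    ring_nf
end

lemma exists_eq_zpow_mul_of_intertwining {q : ℤ} (hq : q ≠ 0) {α₁ α₂ : ℂ}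
    {Θ : (ℤ →₀ ℂ) →ₗ[ℂ] (ℤ →₀ ℂ)} (hΘ : Function.Injective Θ)
    (hcomm : ∀ v, Θ (heisRep q α₁ (1, 0, 0) v) = heisRep q α₂ (1, 0, 0) (Θ v)) :
    ∃ l : ℤ, α₁ = (q : ℂ) ^ l * α₂ := by
  have hq' : (q : ℂ) ≠ 0 := by exact_mod_cast hq
  have hv : Θ (Finsupp.single 0 1) ≠ 0 :=
    (map_ne_zero_iff Θ hΘ).mpr (Finsupp.single_ne_zero.mpr one_ne_zero)
  have heigen : heisRep q α₂ (1, 0, 0) (Θ (Finsupp.single 0 1)) =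
      ((q : ℂ) ^ (-1 : ℤ) * α₁) • Θ (Finsupp.single 0 1) := by
    rw [← hcomm, heisRep_single, ← Finsupp.smul_single_one, map_smul]
    norm_num
  obtain ⟨n, hn⟩ := exists_eq_zpow_mul_of_heisRep_apply_eq_smul q α₂ hv heigen
  refine ⟨-n, ?_⟩
  calc α₁ = (q : ℂ) ^ (1 : ℤ) * ((q : ℂ) ^ (-1 : ℤ) * α₁) := by
        rw [← mul_assoc, ← zpow_add₀ hq']; simp
    _ = (q : ℂ) ^ (-n) * α₂ := by
        rw [hn, ← mul_assoc, ← zpow_add₀ hq']; ring_nf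

theorem statement11_general (q : ℤ) (hq : 2 ≤ q) (α₁ α₂ : ℂ) :
    (∃ Θ : (ℤ →₀ ℂ) ≃ₗ[ℂ] (ℤ →₀ ℂ),
      ∀ g : ℤ × ℤ × ℤ, ∀ v : ℤ →₀ ℂ, Θ (heisRep q α₁ g v) = heisRep q α₂ g (Θ v)) ↔
    ∃ l : ℤ, α₁ = (q : ℂ) ^ l * α₂ := by
  have hq0 : q ≠ 0 := by omega
  constructor
  · rintro ⟨Θ, hΘ⟩
    exact exists_eq_zpow_mul_of_intertwining hq0 Θ.injective (hΘ (1, 0, 0))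
  · rintro ⟨l, rfl⟩
    exact ⟨_, heisRep_domLCongr_subRight q α₂ hq0 l⟩

/-- For nonzero `α₁, α₂ ∈ ℂ`, the representations `ρ_{α₁}` and `ρ_{α₂}` of the discrete
Heisenberg group are isomorphic (there is a ℂ-linear bijection `Θ : V → V` with
`Θ ∘ ρ_{α₁}(g) = ρ_{α₂}(g) ∘ Θ` for all `g`) if and only if `α₁ = q^l·α₂` for some `l ∈ ℤ`;
thus the isomorphism classes are parametrized by the elliptic curve `ℂ*/q^ℤ`. -/
theorem statement11 (q : ℤ) (hq : 2 ≤ q) (α₁ α₂ : ℂ) (h₁ : α₁ ≠ 0) (h₂ : α₂ ≠ 0) :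
    (∃ Θ : (ℤ →₀ ℂ) ≃ₗ[ℂ] (ℤ →₀ ℂ),
      ∀ g : ℤ × ℤ × ℤ, ∀ v : ℤ →₀ ℂ, Θ (heisRep q α₁ g v) = heisRep q α₂ g (Θ v)) ↔
    ∃ l : ℤ, α₁ = (q : ℂ) ^ l * α₂ :=
  statement11_general q hq α₁ α₂
end

section
/- The map ρ̃_α is a representation of the extended group G̃ on V: each ρ̃_α(a,b,c,d) is a ℂ-linear automorphism of V, ρ̃_α(x ⋆ y) = ρ̃_α(x) ∘ ρ̃_α(y) for all x, y ∈ G̃, and the restriction of ρ̃_α to the subgroup {(a,b,c,0)} coincides with the representation ρ_α of the Heisenberg group, i.e. ρ̃_α(a,b,c,0)(Δ_l) = q^{−c−a(l+1)}·α^a·Δ_{l+b}. -/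
/-- Multiplication of the extended group `G̃ = Heis(3,ℤ) ⋊ ℤ` on `ℤ⁴`:
`(a₁,b₁,c₁,d₁) ⋆ (a₂,b₂,c₂,d₂) =
  (a₁+a₂+d₁·b₂, b₁+b₂, c₁+c₂+b₂(b₂−1)d₁/2 + a₁·b₂, d₁+d₂)`. -/
def tmul (x y : ℤ × ℤ × ℤ × ℤ) : ℤ × ℤ × ℤ × ℤ :=
  (x.1 + y.1 + x.2.2.2 * y.2.1, x.2.1 + y.2.1,
    x.2.2.1 + y.2.2.1 + y.2.1 * (y.2.1 - 1) * x.2.2.2 / 2 + x.1 * y.2.1,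
    x.2.2.2 + y.2.2.2)

/-- The operator `ρ̃_α(a,b,c,d)` on the space `V = ℤ →₀ ℂ` of finitely supported
functions, defined on the standard basis by
`ρ̃_α(a,b,c,d)(Δ_l) = q^{−c−a(l+1)−d·l(l+1)/2}·α^{a+d·l}·Δ_{l+b}`. -/
noncomputable def extRep (q : ℤ) (α : ℂ) (x : ℤ × ℤ × ℤ × ℤ) :
    (ℤ →₀ ℂ) →ₗ[ℂ] (ℤ →₀ ℂ) :=
  Finsupp.lift (ℤ →₀ ℂ) ℂ ℤ fun l =>
    ((q : ℂ) ^ (-x.2.2.1 - x.1 * (l + 1) - x.2.2.2 * (l * (l + 1) / 2)) *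
        α ^ (x.1 + x.2.2.2 * l)) • Finsupp.single (l + x.2.1) (1 : ℂ)

/-!
The basis vector `Δ_l` is sent to a multiple `C_x(l) • Δ_{l+b}`, so the homomorphism property
reduces to the cocycle identity `C_{x⋆y}(l) = C_y(l) · C_x(l+b₂)` for the coefficients. On the
exponents of `q` and `α` this is an integer identity; the only nonlinear ingredient is the
triangular-number shift `T(l+b) = T(l) + b(l+1) + b(b-1)/2` with `T(l) = l(l+1)/2`, which is
exactly what the term `b₂(b₂−1)d₁/2` in the group law compensates. Bijectivity follows because
every element of `G̃` has a right inverse, so each `ρ̃_α(x)` is a unit of `End(V)`.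
-/

lemma Int.add_mul_add_add_one_ediv_two (l b : ℤ) :
    (l + b) * (l + b + 1) / 2 = l * (l + 1) / 2 + b * (l + 1) + b * (b - 1) / 2 := by
  rw [show (l + b) * (l + b + 1) = l * (l + 1) + b * (b - 1) + b * (l + 1) * 2 by ring,
    Int.add_mul_ediv_right _ _ two_ne_zero,
    Int.add_ediv_of_dvd_right (Int.even_mul_pred_self b).two_dvd]
  ring

def tinv (x : ℤ × ℤ × ℤ × ℤ) : ℤ × ℤ × ℤ × ℤ :=
  (-x.1 + x.2.2.2 * x.2.1, -x.2.1,
    -x.2.2.1 - x.2.1 * (x.2.1 + 1) * x.2.2.2 / 2 + x.1 * x.2.1, -x.2.2.2)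

lemma tmul_tinv (x : ℤ × ℤ × ℤ × ℤ) : tmul x (tinv x) = (0, 0, 0, 0) := by
  obtain ⟨a, b, c, d⟩ := x
  simp only [tmul, tinv, Prod.mk.injEq]
  refine ⟨by ring, by ring, ?_, by ring⟩
  rw [show -b * (-b - 1) * d = b * (b + 1) * d by ring]
  ring

def qExponent (x : ℤ × ℤ × ℤ × ℤ) (l : ℤ) : ℤ :=
  -x.2.2.1 - x.1 * (l + 1) - x.2.2.2 * (l * (l + 1) / 2)

def αExponent (x : ℤ × ℤ × ℤ × ℤ) (l : ℤ) : ℤ :=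
  x.1 + x.2.2.2 * l

lemma qExponent_tmul (x y : ℤ × ℤ × ℤ × ℤ) (l : ℤ) :
    qExponent (tmul x y) l = qExponent y l + qExponent x (l + y.2.1) := by
  obtain ⟨a₁, b₁, c₁, d₁⟩ := x
  obtain ⟨a₂, b₂, c₂, d₂⟩ := y
  simp only [qExponent, tmul]
  rw [Int.mul_ediv_assoc' _ (Int.even_mul_pred_self b₂).two_dvd,
    Int.add_mul_add_add_one_ediv_two]
  ring

lemma αExponent_tmul (x y : ℤ × ℤ × ℤ × ℤ) (l : ℤ) :
    αExponent (tmul x y) l = αExponent y l + αExponent x (l + y.2.1) := by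
  simp only [αExponent, tmul]
  ring

section extRep

variable (q : ℤ) (α : ℂ)

noncomputable def extCoeff (x : ℤ × ℤ × ℤ × ℤ) (l : ℤ) : ℂ :=
  (q : ℂ) ^ qExponent x l * α ^ αExponent x l

lemma extCoeff_tmul (hq : (q : ℂ) ≠ 0) (hα : α ≠ 0) (x y : ℤ × ℤ × ℤ × ℤ) (l : ℤ) :
    extCoeff q α (tmul x y) l = extCoeff q α y l * extCoeff q α x (l + y.2.1) := by
  simp only [extCoeff, qExponent_tmul, αExponent_tmul, zpow_add₀ hq, zpow_add₀ hα]
  ring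

lemma extRep_single (x : ℤ × ℤ × ℤ × ℤ) (l : ℤ) :
    extRep q α x (Finsupp.single l 1) = extCoeff q α x l • Finsupp.single (l + x.2.1) 1 := by
  rw [extRep, Finsupp.lift_apply, Finsupp.sum_single_index] <;>
    simp [extCoeff, qExponent, αExponent]

lemma extRep_zero : extRep q α (0, 0, 0, 0) = 1 := by
  ext l : 2
  simp [extRep_single, extCoeff, qExponent, αExponent]

lemma extRep_tmul (hq : (q : ℂ) ≠ 0) (hα : α ≠ 0) (x y : ℤ × ℤ × ℤ × ℤ) :
    extRep q α (tmul x y) = extRep q α x * extRep q α y := by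
  ext l : 2
  simp only [LinearMap.comp_apply, Finsupp.lsingle_apply, Module.End.mul_apply]
  rw [extRep_single, extRep_single, map_smul, extRep_single, extCoeff_tmul q α hq hα, smul_smul,
    add_assoc, add_comm y.2.1]
  rfl

lemma isUnit_extRep (hq : (q : ℂ) ≠ 0) (hα : α ≠ 0) (x : ℤ × ℤ × ℤ × ℤ) :
    IsUnit (extRep q α x) := by
  have hinv (x) : extRep q α x * extRep q α (tinv x) = 1 := by
    rw [← extRep_tmul q α hq hα, tmul_tinv, extRep_zero]
  have hright := hinv (tinv x)
  rw [← left_inv_eq_right_inv (hinv x) hright] at hright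
  exact isUnit_iff_exists.mpr ⟨_, hinv x, hright⟩

end extRep

/-- `ρ̃_α` is a representation of the extended group `G̃` on `V`: each `ρ̃_α(x)` is a
ℂ-linear automorphism of `V`, `ρ̃_α(x ⋆ y) = ρ̃_α(x) ∘ ρ̃_α(y)`, and the restriction to the
subgroup `{(a,b,c,0)}` is the representation `ρ_α` of the Heisenberg group:
`ρ̃_α(a,b,c,0)(Δ_l) = q^{−c−a(l+1)}·α^a·Δ_{l+b}`. -/
theorem statement15 (q : ℤ) (hq : 2 ≤ q) (α : ℂ) (hα : α ≠ 0) :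
    (∀ x : ℤ × ℤ × ℤ × ℤ, ∀ l : ℤ,
      extRep q α x (Finsupp.single l 1) =
        ((q : ℂ) ^ (-x.2.2.1 - x.1 * (l + 1) - x.2.2.2 * (l * (l + 1) / 2)) *
          α ^ (x.1 + x.2.2.2 * l)) • Finsupp.single (l + x.2.1) 1) ∧
    (∀ x : ℤ × ℤ × ℤ × ℤ, Function.Bijective (extRep q α x)) ∧
    (∀ x y : ℤ × ℤ × ℤ × ℤ,
      extRep q α (tmul x y) = (extRep q α x).comp (extRep q α y)) ∧
    (∀ a b c l : ℤ,
      extRep q α (a, b, c, 0) (Finsupp.single l 1) =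
        ((q : ℂ) ^ (-c - a * (l + 1)) * α ^ a) • Finsupp.single (l + b) 1) := by
  have hq0 : (q : ℂ) ≠ 0 := by exact_mod_cast (show q ≠ 0 by omega)
  refine ⟨extRep_single q α, fun x => (Module.End.isUnit_iff _).mp (isUnit_extRep q α hq0 hα x),
    extRep_tmul q α hq0 hα, fun a b c l => ?_⟩
  simp [extRep_single, extCoeff, qExponent, αExponent]
end
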